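/- Let f : ℝⁿ → ℝ be convex differentiable with minimizer x*, and let x : [t₀,∞) → ℝⁿ (t₀ > 0) be a C² solution of ẍ(t) + (3/t) ẋ(t) + ∇f(x(t)) = 0. With z(t) = x(t) + (t/2) ẋ(t), the function V(t) = t² ( (4/t²)·(1/2)‖x* − z(t)‖² + f(x(t)) − f(x*) ) = 2‖x* − z(t)‖² + t²(f(x(t)) − f(x*)) is nonincreasing, and hence f(x(t)) − f(x*) ≤ V(t₀)/t² for all t ≥ t₀. -/

import Mathlib

/-!
With the damping `3 / t`, the auxiliary point `z = x + (t / 2) ẋ` moves with velocity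
`ż = -(t / 2) ∇f(x)`. Hence `d/dt 2‖x* - z‖² = 2t⟪∇f(x), x* - x⟫ - t²⟪∇f(x), ẋ⟫`, and the last
term cancels against the derivative of `f ∘ x` in `d/dt t² (f(x) - f(x*))`, leaving
`V' = 2t (⟪∇f(x), x* - x⟫ + f(x) - f(x*))`, which is `≤ 0` by the first-order characterization of
convexity. The rate follows by dropping `2‖x* - z‖² ≥ 0` from `V t ≤ V t₀`.
-/

open Real Set

local notation "⟪" x ", " y "⟫" => @inner ℝ _ _ x y

theorem ConvexOn.apply_sub_le_of_hasFDerivAt {E : Type*} [NormedAddCommGroup E] [NormedSpace ℝ E]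
    {s : Set E} {f : E → ℝ} {f' : E →L[ℝ] ℝ} {a b : E}
    (hf : ConvexOn ℝ s f) (ha : a ∈ s) (hb : b ∈ s) (hf' : HasFDerivAt f f' a) :
    f' (b - a) ≤ f b - f a := by
  set L : ℝ →ᵃ[ℝ] E := AffineMap.lineMap a b
  have hline : ConvexOn ℝ (L ⁻¹' s) (f ∘ L) := hf.comp_affineMap L
  have hderiv : HasDerivAt (f ∘ L) (f' (b - a)) 0 :=
    (by simpa [L] using hf' : HasFDerivAt f f' (L 0)).comp_hasDerivAt 0
      AffineMap.hasDerivAt_lineMap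
  simpa [slope_def_field, L] using
    hline.le_slope_of_hasDerivAt (by simpa [L] using ha) (by simpa [L] using hb) one_pos hderiv

section Gradient

variable {F : Type*} [NormedAddCommGroup F] [InnerProductSpace ℝ F] [CompleteSpace F]
  {f : F → ℝ} {g : F}

theorem ConvexOn.inner_sub_le_of_hasGradientAt {s : Set F} {a b : F}
    (hf : ConvexOn ℝ s f) (ha : a ∈ s) (hb : b ∈ s) (hg : HasGradientAt f g a) :
    ⟪g, b - a⟫ ≤ f b - f a := by
  simpa using hf.apply_sub_le_of_hasFDerivAt ha hb hg.hasFDerivAt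

theorem HasGradientAt.comp_hasDerivAt {x : ℝ → F} {v : F} {t : ℝ}
    (hg : HasGradientAt f g (x t)) (hx : HasDerivAt x v t) :
    HasDerivAt (fun s ↦ f (x s)) ⟪g, v⟫ t :=
  hg.hasFDerivAt.comp_hasDerivAt t hx

end Gradient

theorem hasDerivAt_add_half_mul_smul_of_nesterov_ode {E : Type*} [NormedAddCommGroup E]
    [NormedSpace ℝ E] {x x' : ℝ → E} {a g : E} {t : ℝ} (ht : t ≠ 0)
    (hx : HasDerivAt x (x' t) t) (hx' : HasDerivAt x' a t)
    (hODE : a + (3 / t) • x' t + g = 0) :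
    HasDerivAt (fun s ↦ x s + (s / 2) • x' s) (-((t / 2) • g)) t := by
  have ha : a = -((3 / t) • x' t + g) := eq_neg_of_add_eq_zero_left (by rwa [← add_assoc])
  subst ha
  have hhalf : HasDerivAt (fun s : ℝ ↦ s / 2) (1 / 2) t := (hasDerivAt_id' t).div_const 2
  refine (hx.add (hhalf.smul hx')).congr_deriv ?_
  match_scalars <;> field_simp; ring

theorem hasDerivAt_nesterov_lyapunov {F : Type*} [NormedAddCommGroup F] [InnerProductSpace ℝ F]
    {x x' z : ℝ → F} {φ : ℝ → ℝ} {g xstar : F} {c t : ℝ}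
    (hz : z t = x t + (t / 2) • x' t) (hzd : HasDerivAt z (-((t / 2) • g)) t)
    (hφ : HasDerivAt φ ⟪g, x' t⟫ t) :
    HasDerivAt (fun s ↦ 2 * ‖xstar - z s‖ ^ 2 + s ^ 2 * (φ s - c))
      (2 * t * (⟪g, xstar - x t⟫ + (φ t - c))) t := by
  have hdist : HasDerivAt (fun s ↦ 2 * ‖xstar - z s‖ ^ 2)
      (2 * (2 * ⟪xstar - z t, 0 - -((t / 2) • g)⟫)) t :=
    (((hasDerivAt_const t xstar).sub hzd).norm_sq).const_mul 2
  have hsq : HasDerivAt (fun s ↦ s ^ 2 * (φ s - c)) (2 * t * (φ t - c) + t ^ 2 * ⟪g, x' t⟫) t :=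
    ((hasDerivAt_pow 2 t).mul (hφ.sub_const c)).congr_deriv (by norm_num)
  refine (hdist.add hsq).congr_deriv ?_
  rw [zero_sub, neg_neg, real_inner_comm, hz]
  simp only [inner_sub_right, inner_add_right, real_inner_smul_left, real_inner_smul_right]
  ring

theorem antitoneOn_of_hasDerivAt_nonpos {D : Set ℝ} (hD : Convex ℝ D) {f f' : ℝ → ℝ}
    (hf : ∀ t ∈ D, HasDerivAt f (f' t) t) (hf' : ∀ t ∈ D, f' t ≤ 0) : AntitoneOn f D :=
  antitoneOn_of_hasDerivWithinAt_nonpos hD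
    (fun t ht ↦ (hf t ht).continuousAt.continuousWithinAt)
    (fun t ht ↦ (hf t (interior_subset ht)).hasDerivWithinAt)
    (fun t ht ↦ hf' t (interior_subset ht))

theorem nesterov_damping_lyapunov_general (n : ℕ)
    (f : EuclideanSpace ℝ (Fin n) → ℝ)
    (f' : EuclideanSpace ℝ (Fin n) → EuclideanSpace ℝ (Fin n))
    (hfconv : ConvexOn ℝ Set.univ f)
    (hfgrad : ∀ x, HasGradientAt f (f' x) x)
    (xstar : EuclideanSpace ℝ (Fin n))
    (t₀ : ℝ) (ht₀ : 0 < t₀)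
    (x x' x'' : ℝ → EuclideanSpace ℝ (Fin n))
    (hx : ∀ t ∈ Set.Ici t₀, HasDerivAt x (x' t) t)
    (hx' : ∀ t ∈ Set.Ici t₀, HasDerivAt x' (x'' t) t)
    (hODE : ∀ t ∈ Set.Ici t₀, x'' t + (3 / t) • x' t + f' (x t) = 0)
    (z : ℝ → EuclideanSpace ℝ (Fin n))
    (hz : ∀ t, z t = x t + (t / 2) • x' t)
    (V : ℝ → ℝ)
    (hV : ∀ t, V t = 2 * ‖xstar - z t‖ ^ 2 + t ^ 2 * (f (x t) - f xstar)) :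
    AntitoneOn V (Set.Ici t₀) ∧
      ∀ t ∈ Set.Ici t₀, f (x t) - f xstar ≤ V t₀ / t ^ 2 := by
  have hpos : ∀ t ∈ Ici t₀, 0 < t := fun t ht ↦ ht₀.trans_le ht
  have hderiv : ∀ t ∈ Ici t₀,
      HasDerivAt V (2 * t * (⟪f' (x t), xstar - x t⟫ + (f (x t) - f xstar))) t := by
    intro t ht
    have hzd := hasDerivAt_add_half_mul_smul_of_nesterov_ode (hpos t ht).ne' (hx t ht) (hx' t ht)
      (hODE t ht)
    rw [funext hV]
    exact hasDerivAt_nesterov_lyapunov (hz t) (funext hz ▸ hzd)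
      ((hfgrad (x t)).comp_hasDerivAt (hx t ht))
  have hanti : AntitoneOn V (Ici t₀) :=
    antitoneOn_of_hasDerivAt_nonpos (convex_Ici t₀) hderiv fun t ht ↦
      have hgrad :=
        hfconv.inner_sub_le_of_hasGradientAt (mem_univ _) (mem_univ xstar) (hfgrad (x t))
      mul_nonpos_of_nonneg_of_nonpos (by linarith [hpos t ht]) (by linarith)
  refine ⟨hanti, fun t ht ↦ ?_⟩
  rw [le_div_iff₀ (pow_pos (hpos t ht) 2)]
  calc (f (x t) - f xstar) * t ^ 2 ≤ V t := by
        rw [hV, mul_comm]; exact le_add_of_nonneg_left (by positivity)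
    _ ≤ V t₀ := hanti self_mem_Ici ht ht

theorem nesterov_damping_lyapunov (n : ℕ)
    (f : EuclideanSpace ℝ (Fin n) → ℝ)
    (f' : EuclideanSpace ℝ (Fin n) → EuclideanSpace ℝ (Fin n))
    (hfconv : ConvexOn ℝ Set.univ f)
    (hfgrad : ∀ x, HasGradientAt f (f' x) x)
    (xstar : EuclideanSpace ℝ (Fin n)) (hmin : ∀ y, f xstar ≤ f y)
    (t₀ : ℝ) (ht₀ : 0 < t₀)
    (x x' x'' : ℝ → EuclideanSpace ℝ (Fin n))
    (hx : ∀ t ∈ Set.Ici t₀, HasDerivAt x (x' t) t)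
    (hx' : ∀ t ∈ Set.Ici t₀, HasDerivAt x' (x'' t) t)
    (hODE : ∀ t ∈ Set.Ici t₀, x'' t + (3 / t) • x' t + f' (x t) = 0)
    (z : ℝ → EuclideanSpace ℝ (Fin n))
    (hz : ∀ t, z t = x t + (t / 2) • x' t)
    (V : ℝ → ℝ)
    (hV : ∀ t, V t = 2 * ‖xstar - z t‖ ^ 2 + t ^ 2 * (f (x t) - f xstar)) :
    AntitoneOn V (Set.Ici t₀) ∧
      ∀ t ∈ Set.Ici t₀, f (x t) - f xstar ≤ V t₀ / t ^ 2 :=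
  nesterov_damping_lyapunov_general n f f' hfconv hfgrad xstar t₀ ht₀ x x' x'' hx hx' hODE z hz V hV
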